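/- arXiv:2605.30979 — 2 statements merged into one kernel-verified Lean document; each statement's English description precedes it below -/
import Mathlib

section
/- Let μ be a probability measure on ℝ² with Gaussian copula C_Σ where Σ has off-diagonal entry ℓ ∈ (−1,1), and marginals with cdf F_i(x) = Φ(sinh(x) + εx), ε > 0, where Φ is the standard normal cdf. Then each marginal density ρ_i = (cosh(x)+ε)φ(sinh(x)+εx) has potential V_i = −log ρ_i with V_i''(x) ≥ 2ε + ε² for all x ∈ ℝ. -/
open Real

/-! With `T x = sinh x + ε x`, the density is `ρ = T' · φ ∘ T`, so
`V = T² / 2 − log T' + log √(2π)` and, using `cosh² − sinh² = 1`,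
`V'' = (cosh x + ε)² + T(x) sinh x − (1 + ε cosh x) / (cosh x + ε)²`.
For `ε ≥ 0` the middle term is nonnegative since `x sinh x ≥ 0`, the last fraction is at most `1`,
and `(cosh x + ε)² ≥ (1 + ε)²`, whence `V'' ≥ (1 + ε)² − 1 = 2ε + ε²`. -/

lemma mul_sinh_nonneg (x : ℝ) : 0 ≤ x * sinh x := by
  rcases le_total 0 x with hx | hx
  · exact mul_nonneg hx (sinh_nonneg_iff.mpr hx)
  · exact mul_nonneg_of_nonpos_of_nonpos hx (sinh_nonpos_iff.mpr hx)

section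

variable {ε : ℝ}

lemma cosh_add_pos (hε : -1 < ε) (x : ℝ) : 0 < cosh x + ε := by
  linarith [one_le_cosh x]

lemma hasDerivAt_sinh_add_mul (ε x : ℝ) :
    HasDerivAt (fun x => sinh x + ε * x) (cosh x + ε) x := by
  exact ((hasDerivAt_sinh x).add ((hasDerivAt_id x).const_mul ε)).congr_deriv (by ring)

lemma neg_log_density_eq (hε : -1 < ε) (x : ℝ) :
    -log ((cosh x + ε) * ((√(2 * π))⁻¹ * exp (-(sinh x + ε * x) ^ 2 / 2))) =
      (sinh x + ε * x) ^ 2 / 2 - log (cosh x + ε) + log √(2 * π) := by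
  have hsqrt : 0 < √(2 * π) := by positivity
  rw [log_mul (cosh_add_pos hε x).ne' (by positivity), log_mul (by positivity) (exp_ne_zero _),
    log_exp, log_inv]
  ring

lemma deriv_potential (hε : -1 < ε) (C : ℝ) :
    deriv (fun x => (sinh x + ε * x) ^ 2 / 2 - log (cosh x + ε) + C) =
      fun x => (sinh x + ε * x) * (cosh x + ε) - sinh x / (cosh x + ε) := by
  funext x
  have hsq := ((hasDerivAt_sinh_add_mul ε x).pow 2).div_const 2
  have hlog := ((hasDerivAt_cosh x).add_const ε).log (cosh_add_pos hε x).ne'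
  refine ((hsq.sub hlog).add_const C).deriv.trans ?_
  ring

lemma hasDerivAt_deriv_potential (hε : -1 < ε) (x : ℝ) :
    HasDerivAt (fun x => (sinh x + ε * x) * (cosh x + ε) - sinh x / (cosh x + ε))
      ((cosh x + ε) ^ 2 + (sinh x + ε * x) * sinh x - (1 + ε * cosh x) / (cosh x + ε) ^ 2) x := by
  have hcosh : HasDerivAt (fun x => cosh x + ε) (sinh x) x := (hasDerivAt_cosh x).add_const ε
  refine (((hasDerivAt_sinh_add_mul ε x).mul hcosh).sub
    ((hasDerivAt_sinh x).div hcosh (cosh_add_pos hε x).ne')).congr_deriv ?_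
  rw [show cosh x * (cosh x + ε) - sinh x * sinh x = 1 + ε * cosh x by
    linear_combination cosh_sq_sub_sinh_sq x]
  ring

lemma two_mul_add_sq_le_second_deriv (hε : 0 ≤ ε) (x : ℝ) :
    2 * ε + ε ^ 2 ≤
      (cosh x + ε) ^ 2 + (sinh x + ε * x) * sinh x - (1 + ε * cosh x) / (cosh x + ε) ^ 2 := by
  have hc := one_le_cosh x
  have hfrac : (1 + ε * cosh x) / (cosh x + ε) ^ 2 ≤ 1 := by
    rw [div_le_one (by positivity)]
    nlinarith
  have hmid : 0 ≤ (sinh x + ε * x) * sinh x := by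
    nlinarith [sq_nonneg (sinh x), mul_sinh_nonneg x]
  nlinarith

end

/-- For the marginal density `ρ(x) = (cosh x + ε) φ(sinh x + εx)` (where `φ` is the standard
normal density), the potential `V = −log ρ` satisfies `V''(x) ≥ 2ε + ε²` for all `x ∈ ℝ`;
i.e. the marginal is uniformly log-concave. -/
theorem stmt_16 (ε : ℝ) (hε : 0 < ε)
    (ρ : ℝ → ℝ)
    (hρ : ρ = fun x => (Real.cosh x + ε) *
      ((Real.sqrt (2 * π))⁻¹ * Real.exp (-(Real.sinh x + ε * x) ^ 2 / 2)))
    (V : ℝ → ℝ) (hV : V = fun x => -Real.log (ρ x)) :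
    ∀ x : ℝ, 2 * ε + ε ^ 2 ≤ deriv (deriv V) x := by
  have hε' : -1 < ε := by linarith
  have hVeq : V = fun x => (sinh x + ε * x) ^ 2 / 2 - log (cosh x + ε) + log √(2 * π) := by
    subst hV hρ
    exact funext (neg_log_density_eq hε')
  intro x
  rw [hVeq, deriv_potential hε', (hasDerivAt_deriv_potential hε' x).deriv]
  exact two_mul_add_sq_le_second_deriv hε.le x
end

section
/- For the Beta distribution Π_β on (0,1) with parameters β_1, β_2 > 0 and weight w_τ(t) = t²(1−t)², the optimal weighted Poincaré constant satisfies C_P(Π_β, w_τ) ≥ 4/min(β_1², β_2²). Specifically, for h_η(t) = t^η with η > −β_1/2, the Rayleigh quotient Var_{Π_β}(h_η)/∫ w_τ (h_η')² dΠ_β tends to 4/β_1² as η → −β_1/2, and symmetrically with (1−t)^η for β_2. -/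
/-!
For `h_η(t) = t^η` the three integrals in the Rayleigh quotient are Beta integrals:
`Var h_η = κ B(β₁+2η, β₂) - κ² B(β₁+η, β₂)²` and `∫ w h_η'² = η² κ B(β₁+2η, β₂+2)`, with
`κ = cB⁻¹`.
With `a = β₁+2η`, the identity `B(a, b+2) = B(a, b) b(b+1)/((a+b)(a+b+1))` turns the quotient into
`(a+β₂)(a+β₂+1)/(β₂(β₂+1) η²)` minus a term carrying the factor `1/Γ(a)`. As `η ↓ -β₁/2` we have
`a → 0`, so the first term tends to `4/β₁²` and the second to `0`, because `1/Γ` is continuous and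
vanishes at `0`. Every `h_η` is an admissible test function, so a Poincaré constant dominates all
these quotients and hence their limit. For `(1-t)^η` the roles of `β₁` and `β₂` are swapped.
-/

open MeasureTheory Filter Set ProbabilityTheory Topology

lemma ofReal_rpow_mul_one_sub_rpow {a b t : ℝ} (ht : t ∈ Icc (0 : ℝ) 1) :
    ((t ^ (a - 1) * (1 - t) ^ (b - 1) : ℝ) : ℂ) =
      (t : ℂ) ^ ((a : ℂ) - 1) * (1 - (t : ℂ)) ^ ((b : ℂ) - 1) := by
  rw [Complex.ofReal_mul, Complex.ofReal_cpow ht.1, Complex.ofReal_cpow (sub_nonneg.2 ht.2)]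
  push_cast
  rfl

lemma integrableOn_rpow_mul_one_sub_rpow {a b : ℝ} (ha : 0 < a) (hb : 0 < b) :
    IntegrableOn (fun t : ℝ => t ^ (a - 1) * (1 - t) ^ (b - 1)) (Ioo 0 1) := by
  have h := Complex.betaIntegral_convergent (u := a) (v := b) (by simpa) (by simpa)
  rw [intervalIntegrable_iff_integrableOn_Ioo_of_le zero_le_one] at h
  have h' := (h.congr_fun (fun t ht => (ofReal_rpow_mul_one_sub_rpow (Ioo_subset_Icc_self ht)).symm)
    measurableSet_Ioo).re
  simp only [RCLike.re_to_complex, Complex.ofReal_re] at h'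
  exact h'

lemma integral_rpow_mul_one_sub_rpow {a b : ℝ} (ha : 0 < a) (hb : 0 < b) :
    ∫ t in Ioo (0 : ℝ) 1, t ^ (a - 1) * (1 - t) ^ (b - 1) = beta a b := by
  have h : Complex.betaIntegral a b =
      ((∫ t in (0 : ℝ)..1, t ^ (a - 1) * (1 - t) ^ (b - 1) : ℝ) : ℂ) := by
    rw [← intervalIntegral.integral_ofReal]
    refine intervalIntegral.integral_congr fun t ht => ?_
    rw [uIcc_of_le zero_le_one] at ht
    exact (ofReal_rpow_mul_one_sub_rpow ht).symm
  rw [beta_eq_betaIntegralReal a b ha hb, h, Complex.ofReal_re,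
    intervalIntegral.integral_of_le zero_le_one, integral_Ioc_eq_integral_Ioo]

lemma Real.continuous_inv_Gamma : Continuous fun x : ℝ => (Real.Gamma x)⁻¹ := by
  refine (Complex.continuous_re.comp (Complex.differentiable_one_div_Gamma.continuous.comp
    Complex.continuous_ofReal)).congr fun x => ?_
  simp [Complex.Gamma_ofReal, ← Complex.ofReal_inv]

lemma Real.continuousAt_Gamma_of_pos {x : ℝ} (hx : 0 < x) : ContinuousAt Real.Gamma x :=
  (Real.differentiableAt_Gamma fun m => by linarith [(Nat.cast_nonneg m : (0 : ℝ) ≤ m)]).continuousAt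

namespace ProbabilityTheory

lemma beta_comm (a b : ℝ) : beta a b = beta b a := by
  rw [beta, beta, mul_comm, add_comm]

lemma beta_add_two_right {a b : ℝ} (hb : 0 < b) (hab : 0 < a + b) :
    beta a (b + 2) = beta a b * (b * (b + 1)) / ((a + b) * (a + b + 1)) := by
  have hΓb : Real.Gamma (b + 2) = (b + 1) * b * Real.Gamma b := by
    rw [show b + 2 = b + 1 + 1 by ring, Real.Gamma_add_one (by positivity),
      Real.Gamma_add_one hb.ne']; ring
  have hΓab : Real.Gamma (a + (b + 2)) = (a + b + 1) * (a + b) * Real.Gamma (a + b) := by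
    rw [show a + (b + 2) = a + b + 1 + 1 by ring, Real.Gamma_add_one (by positivity),
      Real.Gamma_add_one hab.ne']; ring
  rw [beta, beta, hΓb, hΓab]
  field_simp

lemma inv_beta (a b : ℝ) :
    (beta a b)⁻¹ = Real.Gamma (a + b) * (Real.Gamma a)⁻¹ * (Real.Gamma b)⁻¹ := by
  rw [beta, inv_div, div_eq_mul_inv, mul_inv, mul_assoc]

lemma continuousAt_beta_left {a b : ℝ} (ha : 0 < a) (hb : 0 < b) :
    ContinuousAt (fun x => beta x b) a := by
  have hab : 0 < a + b := by linarith
  exact ((Real.continuousAt_Gamma_of_pos ha).mul continuousAt_const).div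
    ((Real.continuousAt_Gamma_of_pos hab).comp_of_eq (by fun_prop) rfl)
    (Real.Gamma_pos_of_pos hab).ne'

lemma continuousAt_inv_beta_left {a b : ℝ} (hab : 0 < a + b) :
    ContinuousAt (fun x => (beta x b)⁻¹) a := by
  simp_rw [inv_beta]
  refine (ContinuousAt.mul ?_ Real.continuous_inv_Gamma.continuousAt).mul continuousAt_const
  exact (Real.continuousAt_Gamma_of_pos hab).comp_of_eq (by fun_prop) rfl

end ProbabilityTheory

lemma tendsto_rayleigh_beta {κ b₁ b₂ : ℝ} (hκ : κ ≠ 0) (hb₁ : 0 < b₁) (hb₂ : 0 < b₂) :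
    Tendsto (fun η => (κ * beta (b₁ + 2 * η) b₂ - (κ * beta (b₁ + η) b₂) ^ 2) /
        (η ^ 2 * κ * beta (b₁ + 2 * η) (b₂ + 2)))
      (𝓝[>] (-b₁ / 2)) (𝓝 (4 / b₁ ^ 2)) := by
  set F : ℝ → ℝ := fun η => (b₁ + 2 * η + b₂) * (b₁ + 2 * η + b₂ + 1) / (b₂ * (b₂ + 1)) / η ^ 2 -
    κ * beta (b₁ + η) b₂ ^ 2 * (beta (b₁ + 2 * η) (b₂ + 2))⁻¹ / η ^ 2 with hF
  have hx₀ : (-b₁ / 2) ^ 2 ≠ 0 := pow_ne_zero 2 (by linarith : -b₁ / 2 < 0).ne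
  have hFcont : ContinuousAt F (-b₁ / 2) := by
    refine ContinuousAt.sub (ContinuousAt.div (by fun_prop) (by fun_prop) hx₀)
      (ContinuousAt.div ?_ (by fun_prop) hx₀)
    refine (continuousAt_const.mul (ContinuousAt.pow ?_ 2)).mul ?_
    · exact (continuousAt_beta_left (by linarith) hb₂).comp_of_eq (by fun_prop) rfl
    · exact (continuousAt_inv_beta_left (a := 0) (by linarith)).comp_of_eq (by fun_prop) (by ring)
  have hFval : F (-b₁ / 2) = 4 / b₁ ^ 2 := by
    have h0 : b₁ + 2 * (-b₁ / 2) = 0 := by ring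
    simp only [hF, h0, inv_beta, Real.Gamma_zero, inv_zero, zero_add, mul_zero, zero_mul,
      zero_div, sub_zero]
    have : b₂ + 1 ≠ 0 := by linarith
    field_simp
    ring
  have hQF : ∀ᶠ η in 𝓝[>] (-b₁ / 2), F η = (κ * beta (b₁ + 2 * η) b₂ - (κ * beta (b₁ + η) b₂) ^ 2) /
        (η ^ 2 * κ * beta (b₁ + 2 * η) (b₂ + 2)) := by
    filter_upwards [Ioo_mem_nhdsGT (show -b₁ / 2 < 0 by linarith)] with η hη
    have ha : 0 < b₁ + 2 * η := by linarith [hη.1]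
    have hη0 : η ≠ 0 := hη.2.ne
    have := beta_pos ha hb₂
    simp only [hF, beta_add_two_right hb₂ (show 0 < b₁ + 2 * η + b₂ by linarith)]
    field_simp
  rw [← hFval]
  exact (hFcont.tendsto.mono_left nhdsWithin_le_nhds).congr' hQF

/-- The Beta density with an arbitrary constant `κ` in place of `1 / B(β₁, β₂)`. -/
noncomputable def scaledBetaDensity (κ β₁ β₂ : ℝ) : ℝ → ℝ :=
  (Ioo 0 1).indicator fun t => κ * t ^ (β₁ - 1) * (1 - t) ^ (β₂ - 1)

noncomputable def scaledBetaMeasure (κ β₁ β₂ : ℝ) : Measure ℝ :=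
  volume.withDensity fun t => ENNReal.ofReal (scaledBetaDensity κ β₁ β₂ t)

section Moments

variable {κ β₁ β₂ a b c : ℝ} {g : ℝ → ℝ}

lemma toReal_scaledBetaDensity_smul_eq_indicator (hκ : 0 ≤ κ)
    (hg : EqOn g (fun t => c * (t ^ a * (1 - t) ^ b)) (Ioo 0 1)) :
    (fun t => (ENNReal.ofReal (scaledBetaDensity κ β₁ β₂ t)).toReal • g t) =
      (Ioo 0 1).indicator fun t => c * κ * (t ^ (β₁ + a - 1) * (1 - t) ^ (β₂ + b - 1)) := by
  ext t
  by_cases ht : t ∈ Ioo (0 : ℝ) 1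
  · have ht' : 0 < 1 - t := sub_pos.2 ht.2
    rw [scaledBetaDensity, indicator_of_mem ht, indicator_of_mem ht, ENNReal.toReal_ofReal
      (mul_nonneg (mul_nonneg hκ (Real.rpow_nonneg ht.1.le _)) (Real.rpow_nonneg ht'.le _)), hg ht,
      smul_eq_mul, show β₁ + a - 1 = β₁ - 1 + a by ring, show β₂ + b - 1 = β₂ - 1 + b by ring,
      Real.rpow_add ht.1, Real.rpow_add ht']
    ring
  · simp [scaledBetaDensity, indicator_of_notMem ht]

lemma measurable_scaledBetaDensity : Measurable (scaledBetaDensity κ β₁ β₂) :=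
  (by fun_prop : Measurable _).indicator measurableSet_Ioo

lemma integrable_scaledBetaMeasure (hκ : 0 ≤ κ) (ha : -β₁ < a) (hb : -β₂ < b)
    (hg : EqOn g (fun t => c * (t ^ a * (1 - t) ^ b)) (Ioo 0 1)) :
    Integrable g (scaledBetaMeasure κ β₁ β₂) := by
  rw [scaledBetaMeasure, integrable_withDensity_iff_integrable_smul'
    measurable_scaledBetaDensity.ennreal_ofReal
    (ae_of_all _ fun _ => ENNReal.ofReal_lt_top), toReal_scaledBetaDensity_smul_eq_indicator hκ hg,
    integrable_indicator_iff measurableSet_Ioo]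
  exact ((integrableOn_rpow_mul_one_sub_rpow (by linarith) (by linarith)).const_mul _)

lemma integral_scaledBetaMeasure (hκ : 0 ≤ κ) (ha : -β₁ < a) (hb : -β₂ < b)
    (hg : EqOn g (fun t => c * (t ^ a * (1 - t) ^ b)) (Ioo 0 1)) :
    ∫ t, g t ∂scaledBetaMeasure κ β₁ β₂ = c * κ * beta (β₁ + a) (β₂ + b) := by
  rw [scaledBetaMeasure, integral_withDensity_eq_integral_toReal_smul
    measurable_scaledBetaDensity.ennreal_ofReal
    (ae_of_all _ fun _ => ENNReal.ofReal_lt_top), toReal_scaledBetaDensity_smul_eq_indicator hκ hg,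
    integral_indicator measurableSet_Ioo, integral_const_mul,
    integral_rpow_mul_one_sub_rpow (by linarith) (by linarith)]

end Moments

def IsPoincareConstant (μ : Measure ℝ) (w : ℝ → ℝ) (C : ℝ) : Prop :=
  ∀ f f' : ℝ → ℝ, (∀ t ∈ Ioo (0 : ℝ) 1, HasDerivAt f (f' t) t) →
    Integrable f μ → Integrable (fun t => f t ^ 2) μ → Integrable (fun t => w t * f' t ^ 2) μ →
    0 < ∫ t, w t * f' t ^ 2 ∂μ →
    ∫ t, f t ^ 2 ∂μ - (∫ t, f t ∂μ) ^ 2 ≤ C * ∫ t, w t * f' t ^ 2 ∂μ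

lemma rpow_sq_eq {x : ℝ} (hx : 0 ≤ x) (η : ℝ) : (x ^ η) ^ 2 = x ^ (2 * η) := by
  rw [← Real.rpow_mul_natCast hx, mul_comm]
  norm_num

lemma sq_mul_rpow_sub_one_sq {x : ℝ} (hx : 0 < x) (η : ℝ) :
    x ^ 2 * (x ^ (η - 1)) ^ 2 = x ^ (2 * η) := by
  rw [rpow_sq_eq hx.le, ← Real.rpow_natCast, ← Real.rpow_add hx]
  congr 1
  push_cast
  ring

section PowerTestFunctions

variable {κ β₁ β₂ η : ℝ}

lemma tendsto_rayleigh_rpow (hκ : 0 < κ) (hβ₁ : 0 < β₁) (hβ₂ : 0 < β₂) :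
    Tendsto (fun η => ((∫ t, t ^ (2 * η) ∂scaledBetaMeasure κ β₁ β₂) -
        (∫ t, t ^ η ∂scaledBetaMeasure κ β₁ β₂) ^ 2) /
        ∫ t, t ^ 2 * (1 - t) ^ 2 * (η * t ^ (η - 1)) ^ 2 ∂scaledBetaMeasure κ β₁ β₂)
      (𝓝[>] (-β₁ / 2)) (𝓝 (4 / β₁ ^ 2)) := by
  refine (tendsto_rayleigh_beta hκ.ne' hβ₁ hβ₂).congr' ?_
  filter_upwards [self_mem_nhdsWithin] with η (hη : -β₁ / 2 < η)
  rw [integral_scaledBetaMeasure hκ.le (a := 2 * η) (b := 0) (c := 1) (by linarith) (by linarith)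
      fun t _ => by simp,
    integral_scaledBetaMeasure hκ.le (a := η) (b := 0) (c := 1) (by linarith) (by linarith)
      fun t _ => by simp,
    integral_scaledBetaMeasure hκ.le (a := 2 * η) (b := 2) (c := η ^ 2) (by linarith) (by linarith)
      fun t ht => by simp only [Real.rpow_two, ← sq_mul_rpow_sub_one_sq ht.1 η]; ring]
  simp only [one_mul, add_zero]

lemma rayleigh_rpow_le {C : ℝ} (hκ : 0 < κ) (hβ₁ : 0 < β₁) (hβ₂ : 0 < β₂)
    (hη : -β₁ / 2 < η) (hη0 : η ≠ 0)
    (hC : IsPoincareConstant (scaledBetaMeasure κ β₁ β₂) (fun t => t ^ 2 * (1 - t) ^ 2) C) :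
    ((∫ t, t ^ (2 * η) ∂scaledBetaMeasure κ β₁ β₂) -
        (∫ t, t ^ η ∂scaledBetaMeasure κ β₁ β₂) ^ 2) /
        ∫ t, t ^ 2 * (1 - t) ^ 2 * (η * t ^ (η - 1)) ^ 2 ∂scaledBetaMeasure κ β₁ β₂ ≤ C := by
  have hf : EqOn (fun t : ℝ => t ^ η) (fun t => 1 * (t ^ η * (1 - t) ^ (0 : ℝ))) (Ioo 0 1) :=
    fun t _ => by simp
  have hf2 : EqOn (fun t : ℝ => (t ^ η) ^ 2) (fun t => 1 * (t ^ (2 * η) * (1 - t) ^ (0 : ℝ)))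
      (Ioo 0 1) := fun t ht => by simp [rpow_sq_eq ht.1.le]
  have hf2' : EqOn (fun t : ℝ => t ^ (2 * η)) (fun t => 1 * (t ^ (2 * η) * (1 - t) ^ (0 : ℝ)))
      (Ioo 0 1) := fun t _ => by simp
  have hw : EqOn (fun t : ℝ => t ^ 2 * (1 - t) ^ 2 * (η * t ^ (η - 1)) ^ 2)
      (fun t => η ^ 2 * (t ^ (2 * η) * (1 - t) ^ (2 : ℝ))) (Ioo 0 1) :=
    fun t ht => by simp only [Real.rpow_two, ← sq_mul_rpow_sub_one_sq ht.1 η]; ring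
  have hpos : 0 < ∫ t, t ^ 2 * (1 - t) ^ 2 * (η * t ^ (η - 1)) ^ 2 ∂scaledBetaMeasure κ β₁ β₂ := by
    rw [integral_scaledBetaMeasure hκ.le (by linarith) (by linarith) hw]
    have := beta_pos (show 0 < β₁ + 2 * η by linarith) (show 0 < β₂ + 2 by linarith)
    positivity
  rw [div_le_iff₀ hpos, integral_scaledBetaMeasure hκ.le (by linarith) (by linarith) hf2',
    ← integral_scaledBetaMeasure hκ.le (by linarith) (by linarith) hf2]
  exact hC _ _ (fun t ht => Real.hasDerivAt_rpow_const (Or.inl ht.1.ne'))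
    (integrable_scaledBetaMeasure hκ.le (by linarith) (by linarith) hf)
    (integrable_scaledBetaMeasure hκ.le (by linarith) (by linarith) hf2)
    (integrable_scaledBetaMeasure hκ.le (by linarith) (by linarith) hw) hpos

lemma tendsto_rayleigh_one_sub_rpow (hκ : 0 < κ) (hβ₁ : 0 < β₁) (hβ₂ : 0 < β₂) :
    Tendsto (fun η => ((∫ t, (1 - t) ^ (2 * η) ∂scaledBetaMeasure κ β₁ β₂) -
        (∫ t, (1 - t) ^ η ∂scaledBetaMeasure κ β₁ β₂) ^ 2) /
        ∫ t, t ^ 2 * (1 - t) ^ 2 * (η * (1 - t) ^ (η - 1)) ^ 2 ∂scaledBetaMeasure κ β₁ β₂)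
      (𝓝[>] (-β₂ / 2)) (𝓝 (4 / β₂ ^ 2)) := by
  refine (tendsto_rayleigh_beta hκ.ne' hβ₂ hβ₁).congr' ?_
  filter_upwards [self_mem_nhdsWithin] with η (hη : -β₂ / 2 < η)
  rw [integral_scaledBetaMeasure hκ.le (a := 0) (b := 2 * η) (c := 1) (by linarith) (by linarith)
      fun t _ => by simp,
    integral_scaledBetaMeasure hκ.le (a := 0) (b := η) (c := 1) (by linarith) (by linarith)
      fun t _ => by simp,
    integral_scaledBetaMeasure hκ.le (a := 2) (b := 2 * η) (c := η ^ 2) (by linarith) (by linarith)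
      fun t ht => by
        simp only [Real.rpow_two, ← sq_mul_rpow_sub_one_sq (sub_pos.2 ht.2) η]; ring]
  simp only [one_mul, add_zero]
  rw [beta_comm β₁, beta_comm β₁, beta_comm (β₁ + 2)]

lemma rayleigh_one_sub_rpow_le {C : ℝ} (hκ : 0 < κ) (hβ₁ : 0 < β₁) (hβ₂ : 0 < β₂)
    (hη : -β₂ / 2 < η) (hη0 : η ≠ 0)
    (hC : IsPoincareConstant (scaledBetaMeasure κ β₁ β₂) (fun t => t ^ 2 * (1 - t) ^ 2) C) :
    ((∫ t, (1 - t) ^ (2 * η) ∂scaledBetaMeasure κ β₁ β₂) -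
        (∫ t, (1 - t) ^ η ∂scaledBetaMeasure κ β₁ β₂) ^ 2) /
        ∫ t, t ^ 2 * (1 - t) ^ 2 * (η * (1 - t) ^ (η - 1)) ^ 2 ∂scaledBetaMeasure κ β₁ β₂ ≤ C := by
  have hf : EqOn (fun t : ℝ => (1 - t) ^ η) (fun t => 1 * (t ^ (0 : ℝ) * (1 - t) ^ η)) (Ioo 0 1) :=
    fun t _ => by simp
  have hf2 : EqOn (fun t : ℝ => ((1 - t) ^ η) ^ 2)
      (fun t => 1 * (t ^ (0 : ℝ) * (1 - t) ^ (2 * η))) (Ioo 0 1) :=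
    fun t ht => by simp [rpow_sq_eq (sub_pos.2 ht.2).le]
  have hf2' : EqOn (fun t : ℝ => (1 - t) ^ (2 * η))
      (fun t => 1 * (t ^ (0 : ℝ) * (1 - t) ^ (2 * η))) (Ioo 0 1) := fun t _ => by simp
  have hw : EqOn (fun t : ℝ => t ^ 2 * (1 - t) ^ 2 * (η * (1 - t) ^ (η - 1)) ^ 2)
      (fun t => η ^ 2 * (t ^ (2 : ℝ) * (1 - t) ^ (2 * η))) (Ioo 0 1) := fun t ht => by
    simp only [Real.rpow_two, ← sq_mul_rpow_sub_one_sq (sub_pos.2 ht.2) η]; ring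
  have hpos : 0 < ∫ t, t ^ 2 * (1 - t) ^ 2 * (η * (1 - t) ^ (η - 1)) ^ 2
      ∂scaledBetaMeasure κ β₁ β₂ := by
    rw [integral_scaledBetaMeasure hκ.le (by linarith) (by linarith) hw]
    have := beta_pos (show 0 < β₁ + 2 by linarith) (show 0 < β₂ + 2 * η by linarith)
    positivity
  have hderiv : ∀ t ∈ Ioo (0 : ℝ) 1,
      HasDerivAt (fun t => (1 - t) ^ η) (-(η * (1 - t) ^ (η - 1))) t := fun t ht => by
    convert ((hasDerivAt_id' t).const_sub 1).rpow_const (p := η) (Or.inl (sub_pos.2 ht.2).ne')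
      using 1
    ring
  have hC' := hC _ _ hderiv (integrable_scaledBetaMeasure hκ.le (by linarith) (by linarith) hf)
    (integrable_scaledBetaMeasure hκ.le (by linarith) (by linarith) hf2)
  simp only [neg_sq] at hC'
  rw [div_le_iff₀ hpos, integral_scaledBetaMeasure hκ.le (by linarith) (by linarith) hf2',
    ← integral_scaledBetaMeasure hκ.le (by linarith) (by linarith) hf2]
  exact hC' (integrable_scaledBetaMeasure hκ.le (by linarith) (by linarith) hw) hpos

end PowerTestFunctions

theorem stmt_18_general (β₁ β₂ : ℝ) (hβ₁ : 0 < β₁) (hβ₂ : 0 < β₂) (cB : ℝ) (hcB : 0 < cB)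
    (B : Measure ℝ)
    (hB : B = volume.withDensity fun t => ENNReal.ofReal
      (Set.indicator (Set.Ioo (0 : ℝ) 1)
        (fun t => cB⁻¹ * t ^ (β₁ - 1) * (1 - t) ^ (β₂ - 1)) t))
    (wτ : ℝ → ℝ) (hwτ : wτ = fun t => t ^ 2 * (1 - t) ^ 2)
    -- the Rayleigh quotients of t ↦ t^η and t ↦ (1-t)^η
    (Q₁ Q₂ : ℝ → ℝ)
    (hQ₁ : Q₁ = fun η =>
      ((∫ t, t ^ (2 * η) ∂B) - (∫ t, t ^ η ∂B) ^ 2) /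
        ∫ t, wτ t * (η * t ^ (η - 1)) ^ 2 ∂B)
    (hQ₂ : Q₂ = fun η =>
      ((∫ t, (1 - t) ^ (2 * η) ∂B) - (∫ t, (1 - t) ^ η ∂B) ^ 2) /
        ∫ t, wτ t * (η * (1 - t) ^ (η - 1)) ^ 2 ∂B) :
    (∀ C : ℝ,
      (∀ f f' : ℝ → ℝ, (∀ t ∈ Set.Ioo (0 : ℝ) 1, HasDerivAt f (f' t) t) →
        Integrable f B → Integrable (fun t => f t ^ 2) B →
        Integrable (fun t => wτ t * f' t ^ 2) B →
        (0 < ∫ t, wτ t * f' t ^ 2 ∂B) →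
        ∫ t, f t ^ 2 ∂B - (∫ t, f t ∂B) ^ 2 ≤ C * ∫ t, wτ t * f' t ^ 2 ∂B) →
      4 / min (β₁ ^ 2) (β₂ ^ 2) ≤ C) ∧
    Tendsto Q₁ (nhdsWithin (-β₁ / 2) (Set.Ioi (-β₁ / 2))) (nhds (4 / β₁ ^ 2)) ∧
    Tendsto Q₂ (nhdsWithin (-β₂ / 2) (Set.Ioi (-β₂ / 2))) (nhds (4 / β₂ ^ 2)) := by
  subst hB hwτ hQ₁ hQ₂
  have hκ : 0 < cB⁻¹ := inv_pos.2 hcB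
  have T₁ := tendsto_rayleigh_rpow hκ hβ₁ hβ₂
  have T₂ := tendsto_rayleigh_one_sub_rpow hκ hβ₁ hβ₂
  refine ⟨fun C hC => ?_, T₁, T₂⟩
  have h₁ : 4 / β₁ ^ 2 ≤ C := le_of_tendsto T₁ <| by
    filter_upwards [Ioo_mem_nhdsGT (show -β₁ / 2 < 0 by linarith)] with η hη
    exact rayleigh_rpow_le hκ hβ₁ hβ₂ hη.1 hη.2.ne hC
  have h₂ : 4 / β₂ ^ 2 ≤ C := le_of_tendsto T₂ <| by
    filter_upwards [Ioo_mem_nhdsGT (show -β₂ / 2 < 0 by linarith)] with η hη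
    exact rayleigh_one_sub_rpow_le hκ hβ₁ hβ₂ hη.1 hη.2.ne hC
  rcases min_choice (β₁ ^ 2) (β₂ ^ 2) with h | h <;> rw [h] <;> assumption

/-- For the Beta distribution `Π_β` on `(0,1)` with parameters `β₁, β₂ > 0` and weight
`w_τ(t) = t²(1−t)²`, every constant `C` for which the weighted Poincaré inequality holds
satisfies `C ≥ 4/min(β₁², β₂²)`; moreover the Rayleigh quotient of `h_η(t) = t^η` tends to
`4/β₁²` as `η → −β₁/2⁺`, and symmetrically the one of `t ↦ (1−t)^η` tends to `4/β₂²`. -/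
theorem stmt_18 (β₁ β₂ : ℝ) (hβ₁ : 0 < β₁) (hβ₂ : 0 < β₂) (cB : ℝ) (hcB : 0 < cB)
    (B : Measure ℝ)
    (hB : B = volume.withDensity fun t => ENNReal.ofReal
      (Set.indicator (Set.Ioo (0 : ℝ) 1)
        (fun t => cB⁻¹ * t ^ (β₁ - 1) * (1 - t) ^ (β₂ - 1)) t))
    (hBprob : IsProbabilityMeasure B)
    (wτ : ℝ → ℝ) (hwτ : wτ = fun t => t ^ 2 * (1 - t) ^ 2)
    -- the Rayleigh quotients of t ↦ t^η and t ↦ (1-t)^η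
    (Q₁ Q₂ : ℝ → ℝ)
    (hQ₁ : Q₁ = fun η =>
      ((∫ t, t ^ (2 * η) ∂B) - (∫ t, t ^ η ∂B) ^ 2) /
        ∫ t, wτ t * (η * t ^ (η - 1)) ^ 2 ∂B)
    (hQ₂ : Q₂ = fun η =>
      ((∫ t, (1 - t) ^ (2 * η) ∂B) - (∫ t, (1 - t) ^ η ∂B) ^ 2) /
        ∫ t, wτ t * (η * (1 - t) ^ (η - 1)) ^ 2 ∂B) :
    (∀ C : ℝ,
      (∀ f f' : ℝ → ℝ, (∀ t ∈ Set.Ioo (0 : ℝ) 1, HasDerivAt f (f' t) t) →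
        Integrable f B → Integrable (fun t => f t ^ 2) B →
        Integrable (fun t => wτ t * f' t ^ 2) B →
        (0 < ∫ t, wτ t * f' t ^ 2 ∂B) →
        ∫ t, f t ^ 2 ∂B - (∫ t, f t ∂B) ^ 2 ≤ C * ∫ t, wτ t * f' t ^ 2 ∂B) →
      4 / min (β₁ ^ 2) (β₂ ^ 2) ≤ C) ∧
    Tendsto Q₁ (nhdsWithin (-β₁ / 2) (Set.Ioi (-β₁ / 2))) (nhds (4 / β₁ ^ 2)) ∧
    Tendsto Q₂ (nhdsWithin (-β₂ / 2) (Set.Ioi (-β₂ / 2))) (nhds (4 / β₂ ^ 2)) :=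
  stmt_18_general β₁ β₂ hβ₁ hβ₂ cB hcB B hB wτ hwτ Q₁ Q₂ hQ₁ hQ₂
end
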